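/- arXiv:2601.11216 — 4 statements merged into one kernel-verified Lean document; each statement's English description precedes it below -/
import Mathlib

section
/- Let α∈(0,1). For all integers i,j≥1, the identity ∑_{k=1}^{i} ∑_{ℓ=1}^{j} ((k−α)^{(i−k)}/(i−k)!) · ((−1)^{k+ℓ}(k+ℓ)!/(k!ℓ!)) · p_α(k+ℓ) · ((ℓ−α)^{(j−ℓ)}/(j−ℓ)!) = p_α(i)·δ_{i,j} − p_α(i)p_α(j) holds, where δ_{i,j}=1 if i=j and 0 otherwise. Equivalently, with Λ_{i,j} = ((−1)^{i+j}(i+j)!/(i!j!))·p_α(i+j) and J_{i,j} = (j−α)^{(i−j)}/(i−j)! for j≤i, J_{i,j}=0 for j>i, the matrix Γ = JΛJ^T equals diag(p_α) − p_α p_α^T. -/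
noncomputable section

/-- Rising factorial `(a)^(m) = a (a+1) ⋯ (a+m-1)` of a real number. -/
def risingFactorial (a : ℝ) : ℕ → ℝ
  | 0 => 1
  | m + 1 => risingFactorial a m * (a + m)

/-- Sibuya probabilities `p_α(r) = α (1-α)^(r-1) / r!` for `r ≥ 1`. -/
def sibuya (α : ℝ) (r : ℕ) : ℝ :=
  α * risingFactorial (1 - α) (r - 1) / (Nat.factorial r : ℝ)

/-- Entry `Λ_{k,ℓ} = (-1)^(k+ℓ) (k+ℓ)!/(k!ℓ!) p_α(k+ℓ)`. -/
def lambdaEntry (α : ℝ) (k l : ℕ) : ℝ :=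
  (-1 : ℝ) ^ (k + l) * (Nat.factorial (k + l) : ℝ) /
    ((Nat.factorial k : ℝ) * (Nat.factorial l : ℝ)) * sibuya α (k + l)

/-- Entry `J_{i,k} = (k-α)^(i-k)/(i-k)!` for `k ≤ i`, and `0` for `k > i`. -/
def jEntry (α : ℝ) (i k : ℕ) : ℝ :=
  if k ≤ i then risingFactorial ((k : ℝ) - α) (i - k) / (Nat.factorial (i - k) : ℝ) else 0

lemma rf_add (a : ℝ) (m n : ℕ) :
    risingFactorial a (m + n) = risingFactorial a m * risingFactorial (a + m) n := by
  induction n with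
  | zero => simp [risingFactorial]
  | succ n ih =>
    have h : m + (n + 1) = (m + n) + 1 := by omega
    rw [h, risingFactorial, ih, risingFactorial]
    push_cast
    ring

lemma rf_one_left (a : ℝ) (m : ℕ) :
    risingFactorial a (m + 1) = a * risingFactorial (a + 1) m := by
  have h := rf_add a 1 m
  rw [Nat.add_comm 1 m] at h
  simpa [risingFactorial] using h

lemma rf_diff (a : ℝ) (n : ℕ) :
    risingFactorial (a + 1) n - risingFactorial a n = n * risingFactorial (a + 1) (n - 1) := by
  cases n with
  | zero => simp [risingFactorial]
  | succ m =>
    rw [rf_one_left a m, risingFactorial]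
    simp only [Nat.succ_sub_one]
    push_cast
    ring

lemma rf_finite_diff (k : ℕ) : ∀ (j : ℕ) (a : ℝ),
    ∑ l ∈ Finset.range (j + 1), (-1 : ℝ) ^ l * (j.choose l : ℝ) * risingFactorial (a + l) k
      = (-1 : ℝ) ^ j * (k.descFactorial j : ℝ) * risingFactorial (a + j) (k - j) := by
  intro j
  induction j with
  | zero => intro a; simp
  | succ j ih =>
    intro a
    have hsum1 := Finset.sum_range_succ'
      (fun l => (-1 : ℝ) ^ l * (((j + 1).choose l : ℕ) : ℝ) * risingFactorial (a + l) k) (j + 1)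
    have hsum2 := Finset.sum_range_succ'
      (fun l => (-1 : ℝ) ^ l * ((j.choose l : ℕ) : ℝ) * risingFactorial (a + l) k) (j + 1)
    have hsum3 := Finset.sum_range_succ
      (fun l => (-1 : ℝ) ^ l * ((j.choose l : ℕ) : ℝ) * risingFactorial (a + l) k) (j + 1)
    have htop : (-1 : ℝ) ^ (j + 1) * ((j.choose (j + 1) : ℕ) : ℝ) * risingFactorial (a + (j + 1 : ℕ)) k = 0 := by
      simp [Nat.choose_eq_zero_of_lt (Nat.lt_succ_self j)]
    have key : ∀ m ∈ Finset.range (j + 1),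
        (-1 : ℝ) ^ (m + 1) * (((j + 1).choose (m + 1) : ℕ) : ℝ) * risingFactorial (a + ↑(m + 1)) k
          = (-1 : ℝ) ^ (m + 1) * ((j.choose (m + 1) : ℕ) : ℝ) * risingFactorial (a + ↑(m + 1)) k
            - (-1 : ℝ) ^ m * ((j.choose m : ℕ) : ℝ) * risingFactorial ((a + 1) + ↑m) k := by
      intro m _
      have : a + ↑(m + 1) = (a + 1) + (m : ℝ) := by push_cast; ring
      rw [Nat.choose_succ_succ', this]
      push_cast
      ring
    have hkey := Finset.sum_congr rfl key
    rw [Finset.sum_sub_distrib] at hkey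
    have iha := ih a
    have iha1 := ih (a + 1)
    have hdiff := rf_diff (a + (j : ℝ)) (k - j)
    have hdesc : ((k.descFactorial (j + 1) : ℕ) : ℝ) = ((k - j : ℕ) : ℝ) * ((k.descFactorial j : ℕ) : ℝ) := by
      rw [Nat.descFactorial_succ]; push_cast; ring
    have hcast1 : a + ((j : ℝ) + 1) = (a + j) + 1 := by ring
    have hcast2 : k - (j + 1) = (k - j) - 1 := by omega
    -- now assemble
    calc ∑ l ∈ Finset.range (j + 1 + 1), (-1 : ℝ) ^ l * (((j + 1).choose l : ℕ) : ℝ) * risingFactorial (a + l) k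
        = (∑ m ∈ Finset.range (j + 1), (-1 : ℝ) ^ (m + 1) * (((j + 1).choose (m + 1) : ℕ) : ℝ) * risingFactorial (a + ↑(m + 1)) k)
          + (-1 : ℝ) ^ 0 * (((j + 1).choose 0 : ℕ) : ℝ) * risingFactorial (a + (0 : ℕ)) k := hsum1
      _ = (-1 : ℝ) ^ j * (k.descFactorial j : ℝ) * risingFactorial (a + j) (k - j)
            - (-1 : ℝ) ^ j * (k.descFactorial j : ℝ) * risingFactorial ((a + 1) + j) (k - j) := by
          rw [hkey, iha1]
          have h0eq : (-1 : ℝ) ^ 0 * (((j + 1).choose 0 : ℕ) : ℝ) * risingFactorial (a + (0 : ℕ)) k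
              = (-1 : ℝ) ^ 0 * ((j.choose 0 : ℕ) : ℝ) * risingFactorial (a + (0 : ℕ)) k := by simp
          rw [h0eq]
          have step : (∑ m ∈ Finset.range (j + 1), (-1 : ℝ) ^ (m + 1) * ((j.choose (m + 1) : ℕ) : ℝ) * risingFactorial (a + ↑(m + 1)) k)
              + (-1 : ℝ) ^ 0 * ((j.choose 0 : ℕ) : ℝ) * risingFactorial (a + (0 : ℕ)) k
              = (-1 : ℝ) ^ j * (k.descFactorial j : ℝ) * risingFactorial (a + j) (k - j) := by
            rw [← hsum2, hsum3, htop, iha]; ring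
          linarith [step]
      _ = (-1 : ℝ) ^ (j + 1) * (k.descFactorial (j + 1) : ℝ) * risingFactorial (a + ↑(j + 1)) (k - (j + 1)) := by
          have : risingFactorial (a + (j:ℝ)) (k - j) - risingFactorial ((a + (j:ℝ)) + 1) (k - j)
              = -(((k - j : ℕ) : ℝ) * risingFactorial ((a + (j:ℝ)) + 1) ((k - j) - 1)) := by
            linarith [hdiff]
          push_cast [hdesc, hcast2]
          have e : a + ((j : ℝ) + 1) = (a + (j:ℝ)) + 1 := by ring
          have e2 : a + 1 + (j : ℝ) = (a + (j:ℝ)) + 1 := by ring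
          rw [e, e2]
          linear_combination ((-1 : ℝ) ^ j * (k.descFactorial j : ℝ)) * this

lemma hfac (n : ℕ) : ((n.factorial : ℕ) : ℝ) ≠ 0 :=
  Nat.cast_ne_zero.mpr n.factorial_ne_zero

lemma sibuya_eq {α : ℝ} {r : ℕ} (hr : 1 ≤ r) :
    sibuya α r = -(risingFactorial (-α) r) / (r.factorial : ℝ) := by
  obtain ⟨s, rfl⟩ := Nat.exists_eq_add_of_le hr
  have h1 : 1 + s = s + 1 := by omega
  rw [sibuya, h1, rf_one_left]
  have h2 : (-α) + 1 = 1 - α := by ring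
  rw [h2]
  have h3 : s + 1 - 1 = s := by omega
  rw [h3]
  ring

lemma term_eq (α : ℝ) (i j k l : ℕ) (hk1 : 1 ≤ k) (hk : k ≤ i) (hl1 : 1 ≤ l) (hl : l ≤ j) :
    jEntry α i k * lambdaEntry α k l * jEntry α j l
      = (-(risingFactorial (-α) j) / (j.factorial : ℝ))
        * ((-1 : ℝ) ^ k * risingFactorial ((k : ℝ) - α) (i - k)
            / ((k.factorial : ℝ) * ((i - k).factorial : ℝ)))
        * ((-1 : ℝ) ^ l * (j.choose l : ℝ) * risingFactorial (-α + l) k) := by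
  rw [jEntry, jEntry, if_pos hk, if_pos hl, lambdaEntry, sibuya_eq (by omega : 1 ≤ k + l)]
  have hR1 : risingFactorial (-α) (k + l)
      = risingFactorial (-α) l * risingFactorial (-α + l) k := by
    rw [Nat.add_comm k l]; exact rf_add (-α) l k
  have hR2 : risingFactorial (-α) j
      = risingFactorial (-α) l * risingFactorial (-α + l) (j - l) := by
    have h := rf_add (-α) l (j - l)
    rwa [Nat.add_sub_cancel' hl] at h
  have hcl : ((l : ℝ)) - α = -α + l := by ring
  rw [hcl, hR1, hR2]
  have hC : ((j.choose l : ℕ) : ℝ) * (l.factorial : ℝ) * ((j - l).factorial : ℝ)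
      = (j.factorial : ℝ) := by
    exact_mod_cast congrArg (Nat.cast : ℕ → ℝ) (Nat.choose_mul_factorial_mul_factorial hl)
  have hpow : (-1 : ℝ) ^ (k + l) = (-1 : ℝ) ^ k * (-1 : ℝ) ^ l := pow_add _ _ _
  field_simp
  rw [hpow, ← hC]
  ring

-- sum over Icc 1 j of the l-part
lemma lsum (α : ℝ) (j k : ℕ) (hj : 1 ≤ j) :
    ∑ l ∈ Finset.Icc 1 j, (-1 : ℝ) ^ l * (j.choose l : ℝ) * risingFactorial (-α + l) k
      = (-1 : ℝ) ^ j * (k.descFactorial j : ℝ) * risingFactorial (-α + j) (k - j)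
        - risingFactorial (-α) k := by
  have h0 : ∑ l ∈ Finset.range (j + 1), (-1 : ℝ) ^ l * (j.choose l : ℝ) * risingFactorial (-α + l) k
      = (-1 : ℝ) ^ 0 * (j.choose 0 : ℝ) * risingFactorial (-α + (0 : ℕ)) k
        + ∑ l ∈ Finset.Icc 1 j, (-1 : ℝ) ^ l * (j.choose l : ℝ) * risingFactorial (-α + l) k := by
    rw [Finset.range_eq_Ico, Finset.sum_eq_sum_Ico_succ_bot (by omega)]
    rw [Finset.Ico_add_one_right_eq_Icc]
  have h1 := rf_finite_diff k j (-α)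
  rw [h0] at h1
  have h2 : (-1 : ℝ) ^ 0 * (j.choose 0 : ℝ) * risingFactorial (-α + (0 : ℕ)) k
      = risingFactorial (-α) k := by simp
  rw [h2] at h1
  linarith

-- the S2 per-k identity
lemma s2term (α : ℝ) (i k : ℕ) (hk : k ≤ i) :
    ((-1 : ℝ) ^ k * risingFactorial ((k : ℝ) - α) (i - k)
        / ((k.factorial : ℝ) * ((i - k).factorial : ℝ))) * risingFactorial (-α) k
      = (-1 : ℝ) ^ k * (i.choose k : ℝ) * risingFactorial (-α) i / (i.factorial : ℝ) := by
  have hR : risingFactorial (-α) i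
      = risingFactorial (-α) k * risingFactorial (-α + k) (i - k) := by
    have h := rf_add (-α) k (i - k)
    rwa [Nat.add_sub_cancel' hk] at h
  have hcl : ((k : ℝ)) - α = -α + k := by ring
  have hC : ((i.choose k : ℕ) : ℝ) * (k.factorial : ℝ) * ((i - k).factorial : ℝ)
      = (i.factorial : ℝ) := by
    exact_mod_cast congrArg (Nat.cast : ℕ → ℝ) (Nat.choose_mul_factorial_mul_factorial hk)
  have hC' : ((i.choose k : ℕ) : ℝ)
      = (i.factorial : ℝ) / ((k.factorial : ℝ) * ((i - k).factorial : ℝ)) := by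
    rw [eq_div_iff (by positivity)]
    linarith [hC]
  rw [hcl, hR, hC']
  field_simp

-- the S1 per-k identity (j ≤ k ≤ i)
lemma s1term (α : ℝ) (i j k : ℕ) (hjk : j ≤ k) (hk : k ≤ i) :
    ((-1 : ℝ) ^ k * risingFactorial ((k : ℝ) - α) (i - k)
        / ((k.factorial : ℝ) * ((i - k).factorial : ℝ)))
      * (k.descFactorial j : ℝ) * risingFactorial (-α + j) (k - j)
      = (-1 : ℝ) ^ k * ((i - j).choose (k - j) : ℝ) * risingFactorial (-α + j) (i - j)
          / ((i - j).factorial : ℝ) := by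
  have hR : risingFactorial (-α + j) (i - j)
      = risingFactorial (-α + j) (k - j) * risingFactorial ((k : ℝ) - α) (i - k) := by
    have h := rf_add (-α + (j : ℝ)) (k - j) (i - k)
    have e1 : (k - j) + (i - k) = i - j := by omega
    have e2 : -α + (j : ℝ) + ((k - j : ℕ) : ℝ) = (k : ℝ) - α := by
      rw [Nat.cast_sub hjk]; ring
    rwa [e1, e2] at h
  have hD : ((k - j).factorial : ℝ) * (k.descFactorial j : ℝ) = (k.factorial : ℝ) := by
    exact_mod_cast congrArg (Nat.cast : ℕ → ℝ) (Nat.factorial_mul_descFactorial hjk)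
  have hC : (((i - j).choose (k - j) : ℕ) : ℝ) * ((k - j).factorial : ℝ) * ((i - k).factorial : ℝ)
      = ((i - j).factorial : ℝ) := by
    have h := Nat.choose_mul_factorial_mul_factorial (show k - j ≤ i - j by omega)
    have e : i - j - (k - j) = i - k := by omega
    rw [e] at h
    exact_mod_cast congrArg (Nat.cast : ℕ → ℝ) h
  have hD' : ((k.descFactorial j : ℕ) : ℝ) = (k.factorial : ℝ) / ((k - j).factorial : ℝ) := by
    rw [eq_div_iff (hfac _)]
    linarith [hD]
  have hC' : (((i - j).choose (k - j) : ℕ) : ℝ)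
      = ((i - j).factorial : ℝ) / (((k - j).factorial : ℝ) * ((i - k).factorial : ℝ)) := by
    rw [eq_div_iff (by positivity)]
    linarith [hC]
  rw [hR, hD', hC']
  field_simp

lemma alt_sum (n : ℕ) : ∑ m ∈ Finset.range (n + 1), (-1 : ℝ) ^ m * (n.choose m : ℝ)
    = if n = 0 then 1 else 0 := by
  have h := Int.alternating_sum_range_choose (n := n)
  have h2 := congrArg (fun z : ℤ => (z : ℝ)) h
  push_cast at h2
  simpa using h2

lemma alt_sum_Icc (n : ℕ) (hn : 1 ≤ n) :
    ∑ k ∈ Finset.Icc 1 n, (-1 : ℝ) ^ k * (n.choose k : ℝ) = -1 := by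
  have h0 : ∑ k ∈ Finset.range (n + 1), (-1 : ℝ) ^ k * (n.choose k : ℝ)
      = (-1 : ℝ) ^ 0 * (n.choose 0 : ℝ)
        + ∑ k ∈ Finset.Icc 1 n, (-1 : ℝ) ^ k * (n.choose k : ℝ) := by
    rw [Finset.range_eq_Ico, Finset.sum_eq_sum_Ico_succ_bot (by omega), Finset.Ico_add_one_right_eq_Icc]
  rw [alt_sum, if_neg (by omega)] at h0
  simp only [pow_zero, Nat.choose_zero_right, Nat.cast_one, one_mul] at h0
  linarith

/-- The covariance matrix identity `Γ = J Λ Jᵀ = diag(p_α) - p_α p_αᵀ`: for all `i, j ≥ 1`,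
`∑_{k=1}^i ∑_{ℓ=1}^j J_{i,k} Λ_{k,ℓ} J_{j,ℓ} = p_α(i) δ_{i,j} - p_α(i) p_α(j)`. -/
theorem covariance_identity (α : ℝ) (hα0 : 0 < α) (hα1 : α < 1)
    (i j : ℕ) (hi : 1 ≤ i) (hj : 1 ≤ j) :
    ∑ k ∈ Finset.Icc 1 i, ∑ l ∈ Finset.Icc 1 j,
        jEntry α i k * lambdaEntry α k l * jEntry α j l =
      (if i = j then sibuya α i else 0) - sibuya α i * sibuya α j := by
  have step1 : ∀ k ∈ Finset.Icc 1 i,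
      ∑ l ∈ Finset.Icc 1 j, jEntry α i k * lambdaEntry α k l * jEntry α j l
        = (-(risingFactorial (-α) j) / (j.factorial : ℝ) * (-1 : ℝ) ^ j)
            * (((-1 : ℝ) ^ k * risingFactorial ((k : ℝ) - α) (i - k)
                / ((k.factorial : ℝ) * ((i - k).factorial : ℝ)))
              * (k.descFactorial j : ℝ) * risingFactorial (-α + j) (k - j))
          - (-(risingFactorial (-α) j) / (j.factorial : ℝ))
            * (((-1 : ℝ) ^ k * risingFactorial ((k : ℝ) - α) (i - k)
                / ((k.factorial : ℝ) * ((i - k).factorial : ℝ)))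
              * risingFactorial (-α) k) := by
    intro k hk
    rw [Finset.mem_Icc] at hk
    have e1 : ∀ l ∈ Finset.Icc 1 j, jEntry α i k * lambdaEntry α k l * jEntry α j l
        = ((-(risingFactorial (-α) j) / (j.factorial : ℝ))
            * ((-1 : ℝ) ^ k * risingFactorial ((k : ℝ) - α) (i - k)
              / ((k.factorial : ℝ) * ((i - k).factorial : ℝ))))
          * ((-1 : ℝ) ^ l * (j.choose l : ℝ) * risingFactorial (-α + l) k) := by
      intro l hl
      rw [Finset.mem_Icc] at hl
      rw [term_eq α i j k l hk.1 hk.2 hl.1 hl.2]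
    rw [Finset.sum_congr rfl e1, ← Finset.mul_sum, lsum α j k hj]
    ring
  rw [Finset.sum_congr rfl step1, Finset.sum_sub_distrib, ← Finset.mul_sum, ← Finset.mul_sum]
  have hS2 : ∑ k ∈ Finset.Icc 1 i,
      ((-1 : ℝ) ^ k * risingFactorial ((k : ℝ) - α) (i - k)
          / ((k.factorial : ℝ) * ((i - k).factorial : ℝ))) * risingFactorial (-α) k
      = -(risingFactorial (-α) i) / (i.factorial : ℝ) := by
    have e : ∀ k ∈ Finset.Icc 1 i,
        ((-1 : ℝ) ^ k * risingFactorial ((k : ℝ) - α) (i - k)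
            / ((k.factorial : ℝ) * ((i - k).factorial : ℝ))) * risingFactorial (-α) k
          = ((-1 : ℝ) ^ k * (i.choose k : ℝ))
              * (risingFactorial (-α) i / (i.factorial : ℝ)) := by
      intro k hk
      rw [Finset.mem_Icc] at hk
      rw [s2term α i k hk.2]
      ring
    rw [Finset.sum_congr rfl e, ← Finset.sum_mul, alt_sum_Icc i hi]
    ring
  have hS1 : ∑ k ∈ Finset.Icc 1 i,
      ((-1 : ℝ) ^ k * risingFactorial ((k : ℝ) - α) (i - k)
          / ((k.factorial : ℝ) * ((i - k).factorial : ℝ)))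
        * (k.descFactorial j : ℝ) * risingFactorial (-α + j) (k - j)
      = if i = j then (-1 : ℝ) ^ j else 0 := by
    by_cases hij : j ≤ i
    · have hsub : Finset.Icc j i ⊆ Finset.Icc 1 i := Finset.Icc_subset_Icc (by omega) le_rfl
      have hzero : ∀ k ∈ Finset.Icc 1 i, k ∉ Finset.Icc j i →
          ((-1 : ℝ) ^ k * risingFactorial ((k : ℝ) - α) (i - k)
              / ((k.factorial : ℝ) * ((i - k).factorial : ℝ)))
            * (k.descFactorial j : ℝ) * risingFactorial (-α + j) (k - j) = 0 := by
        intro k hk hk'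
        rw [Finset.mem_Icc] at hk hk'
        have hlt : k < j := by omega
        rw [Nat.descFactorial_eq_zero_iff_lt.mpr hlt]
        simp
      rw [← Finset.sum_subset hsub hzero]
      have e : ∀ k ∈ Finset.Icc j i,
          ((-1 : ℝ) ^ k * risingFactorial ((k : ℝ) - α) (i - k)
              / ((k.factorial : ℝ) * ((i - k).factorial : ℝ)))
            * (k.descFactorial j : ℝ) * risingFactorial (-α + j) (k - j)
          = ((-1 : ℝ) ^ k * ((i - j).choose (k - j) : ℝ))
              * (risingFactorial (-α + j) (i - j) / ((i - j).factorial : ℝ)) := by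
        intro k hk
        rw [Finset.mem_Icc] at hk
        rw [s1term α i j k hk.1 hk.2]
        ring
      rw [Finset.sum_congr rfl e, ← Finset.sum_mul]
      have hsum : ∑ k ∈ Finset.Icc j i, (-1 : ℝ) ^ k * ((i - j).choose (k - j) : ℝ)
          = if i = j then (-1 : ℝ) ^ j else 0 := by
        rw [← Finset.Ico_add_one_right_eq_Icc, Finset.sum_Ico_eq_sum_range]
        have e2 : i + 1 - j = (i - j) + 1 := by omega
        rw [e2]
        have e3 : ∀ m ∈ Finset.range ((i - j) + 1),
            (-1 : ℝ) ^ (j + m) * ((i - j).choose ((j + m) - j) : ℝ)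
              = (-1 : ℝ) ^ j * ((-1 : ℝ) ^ m * ((i - j).choose m : ℝ)) := by
          intro m _
          have h4 : j + m - j = m := by omega
          rw [h4, pow_add]
          ring
        rw [Finset.sum_congr rfl e3, ← Finset.mul_sum, alt_sum (i - j)]
        by_cases hij2 : i = j
        · rw [if_pos (by omega), if_pos hij2, mul_one]
        · rw [if_neg (by omega), if_neg hij2, mul_zero]
      rw [hsum]
      by_cases hij2 : i = j
      · subst hij2
        simp [Nat.sub_self, risingFactorial]
      · simp [hij2]
    · rw [if_neg (by omega)]
      apply Finset.sum_eq_zero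
      intro k hk
      rw [Finset.mem_Icc] at hk
      rw [Nat.descFactorial_eq_zero_iff_lt.mpr (by omega)]
      simp
  rw [hS1, hS2, sibuya_eq hi, sibuya_eq hj]
  by_cases hij : i = j
  · subst hij
    rw [if_pos rfl, if_pos rfl]
    have hm : (-1 : ℝ) ^ i * (-1 : ℝ) ^ i = 1 := by
      rw [← pow_add, ← two_mul, pow_mul]
      norm_num
    linear_combination (-(risingFactorial (-α) i) / (i.factorial : ℝ)) * hm
  · rw [if_neg hij, if_neg hij]
    ring

end
end

section
/- Let α∈(0,1) and θ>0, and let (K_n,(K_{r,n})_{r≥1}) be the Ewens–Pitman block-counting chain with parameters (α,θ). Then for every real q with 0<q<1+θ/α, one has sup_{n≥1} E[(K_n/n^α)^{−q}] < ∞. -/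
/-!
With `c = θ / α`, the function `g k = Γ(k + c - q) / Γ(k + c)` satisfies
`g (k + 1) (α k + θ) = g k (α k + θ - α q)`, and it is positive for `k ≥ 1` because `q < 1 + c`.
Since `K` only changes when a new block is created, with probability `(α K_n + θ) / (n + θ)`,
this gives `E g(K_{n+1}) = (1 - α q / (n + θ)) E g(K_n)`, hence
`E g(K_n) = g 1 ∏_{1 ≤ j < n} (1 - α q / (j + θ)) ≤ g 1 ((1 + θ) / (n + θ)) ^ (α q)`.
Log-convexity of `Γ` gives `k ^ (-q) ≤ (1 + c) ^ q g k`, so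
`E (K_n / n ^ α) ^ (-q) ≤ (1 + c) ^ q g 1 (1 + θ) ^ (α q)` for every `n`.
-/

open MeasureTheory ProbabilityTheory Filter Topology

noncomputable section

/-- The Ewens–Pitman block-counting chain with parameters `(α, θ)` on a probability space
`(Ω, μ)` with filtration `F`: for `n ≥ 1`, `K n` is the number of blocks and `B r n` the
number of blocks of size `r` of the Ewens–Pitman random partition of `{1,…,n}`.
It starts from `K 1 = 1`, `B 1 1 = 1`, `B r 1 = 0` for `r ≥ 2`, and the transition from
time `n` to `n+1` creates a new block with conditional probability `(α K n + θ)/(n + θ)`,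
and grows a block of size `r` to size `r+1` with conditional probability
`(r - α) B r n / (n + θ)`. -/
structure IsEwensPitman (α θ : ℝ) {Ω : Type*} {mΩ : MeasurableSpace Ω}
    (μ : Measure Ω) (F : Filtration ℕ mΩ) (K : ℕ → Ω → ℕ) (B : ℕ → ℕ → Ω → ℕ) :
    Prop where
  prob : IsProbabilityMeasure μ
  meas_K : ∀ n, Measurable[F n] (K n)
  meas_B : ∀ r n, Measurable[F n] (B r n)
  init_K : ∀ᵐ ω ∂μ, K 1 ω = 1
  init_B1 : ∀ᵐ ω ∂μ, B 1 1 ω = 1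
  init_B : ∀ r, 2 ≤ r → ∀ᵐ ω ∂μ, B r 1 ω = 0
  B_eq_zero : ∀ r n, n < r → ∀ᵐ ω ∂μ, B r n ω = 0
  sum_blocks : ∀ n, 1 ≤ n → ∀ᵐ ω ∂μ, K n ω = ∑ r ∈ Finset.Icc 1 n, B r n ω
  sum_sizes : ∀ n, 1 ≤ n → ∀ᵐ ω ∂μ, n = ∑ r ∈ Finset.Icc 1 n, r * B r n ω
  trans_new : ∀ n, 1 ≤ n →
    μ[Set.indicator {ω | K (n+1) ω = K n ω + 1 ∧ B 1 (n+1) ω = B 1 n ω + 1 ∧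
        ∀ s, 2 ≤ s → B s (n+1) ω = B s n ω} (fun _ => (1:ℝ)) | F n]
      =ᵐ[μ] fun ω => (α * (K n ω : ℝ) + θ) / ((n : ℝ) + θ)
  trans_grow : ∀ n, 1 ≤ n → ∀ r, 1 ≤ r →
    μ[Set.indicator {ω | K (n+1) ω = K n ω ∧ B r (n+1) ω + 1 = B r n ω ∧
        B (r+1) (n+1) ω = B (r+1) n ω + 1 ∧
        ∀ s, 1 ≤ s → s ≠ r → s ≠ r + 1 → B s (n+1) ω = B s n ω} (fun _ => (1:ℝ)) | F n]
      =ᵐ[μ] fun ω => (((r : ℝ) - α) * (B r n ω : ℝ)) / ((n : ℝ) + θ)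

namespace Real

theorem Gamma_add_le_Gamma_mul_rpow {x p : ℝ} (hx : 0 < x) (hp : 0 ≤ p) :
    Gamma (x + p) ≤ Gamma x * (x + p) ^ p := by
  rcases hp.eq_or_lt with rfl | hp
  · simp
  have hxp : 0 < x + p := by linarith
  -- log-convexity: the slope of `log ∘ Gamma` on `[x, x + p]` is at most its slope
  -- `log (x + p)` on `[x + p, x + p + 1]`
  have hslope := convexOn_log_Gamma.slope_mono_adjacent (Set.mem_Ioi.2 hx)
    (Set.mem_Ioi.2 (by linarith : 0 < x + p + 1)) (by linarith : x < x + p)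
    (by linarith : x + p < x + p + 1)
  simp only [Function.comp_apply, Gamma_add_one hxp.ne',
    log_mul hxp.ne' (Gamma_pos_of_pos hxp).ne', add_sub_cancel_left, add_sub_cancel_right,
    div_one] at hslope
  rw [div_le_iff₀ hp] at hslope
  rw [← log_le_log_iff (Gamma_pos_of_pos (by linarith)) (by positivity),
    log_mul (Gamma_pos_of_pos hx).ne' (by positivity), log_rpow hxp]
  linarith

theorem one_sub_div_le_rpow_div_add_one {x l : ℝ} (hx : 0 < x) (hl : 0 ≤ l) :
    1 - l / x ≤ (x / (x + 1)) ^ l := by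
  have hlog : -(1 / x) ≤ log (x / (x + 1)) := by
    calc -(1 / x) = 1 - (x / (x + 1))⁻¹ := by field_simp; ring
      _ ≤ log (x / (x + 1)) := one_sub_inv_le_log_of_pos (by positivity)
  calc 1 - l / x ≤ exp (-(l / x)) := by linarith [add_one_le_exp (-(l / x))]
    _ ≤ exp (log (x / (x + 1)) * l) := by gcongr; nlinarith [div_eq_mul_one_div l x]
    _ = (x / (x + 1)) ^ l := (rpow_def_of_pos (by positivity) l).symm

end Real

theorem prod_one_sub_div_le_rpow {θ l : ℝ} (hθ : -1 < θ) (hl0 : 0 ≤ l) (hl : l ≤ 1 + θ)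
    {n : ℕ} (hn : 1 ≤ n) :
    ∏ j ∈ Finset.Ico 1 n, (1 - l / (j + θ)) ≤ ((1 + θ) / (n + θ)) ^ l := by
  induction n, hn using Nat.le_induction with
  | base => simp [div_self (by linarith : 1 + θ ≠ 0)]
  | succ n hn ih =>
    have hn1 : (1 : ℝ) ≤ n := by exact_mod_cast hn
    have hnθ : 0 < n + θ := by linarith
    rw [Finset.prod_Ico_succ_top hn]
    calc _ ≤ ((1 + θ) / (n + θ)) ^ l * ((n + θ) / (n + θ + 1)) ^ l :=
          mul_le_mul ih (Real.one_sub_div_le_rpow_div_add_one hnθ hl0)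
            (sub_nonneg.2 ((div_le_one hnθ).2 (by linarith)))
            (Real.rpow_nonneg (div_nonneg (by linarith) hnθ.le) l)
      _ = ((1 + θ) / ((n + 1 : ℕ) + θ)) ^ l := by
          rw [← Real.mul_rpow (div_nonneg (by linarith) hnθ.le) (by positivity)]
          congr 1
          rw [div_mul_div_comm, mul_comm (1 + θ), mul_div_mul_left _ _ hnθ.ne']
          push_cast
          ring

theorem rpow_mul_prod_one_sub_div_le {θ l : ℝ} (hθ : 0 ≤ θ) (hl0 : 0 ≤ l) (hl : l ≤ 1 + θ)
    {n : ℕ} (hn : 1 ≤ n) :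
    (n : ℝ) ^ l * ∏ j ∈ Finset.Ico 1 n, (1 - l / (j + θ)) ≤ (1 + θ) ^ l := by
  have hn1 : (1 : ℝ) ≤ n := by exact_mod_cast hn
  calc (n : ℝ) ^ l * ∏ j ∈ Finset.Ico 1 n, (1 - l / (j + θ))
      ≤ (n : ℝ) ^ l * ((1 + θ) / (n + θ)) ^ l := by
        gcongr
        exact prod_one_sub_div_le_rpow (by linarith) hl0 hl hn
    _ = (n / (n + θ) * (1 + θ)) ^ l := by
        rw [← Real.mul_rpow (by positivity) (by positivity)]
        ring_nf
    _ ≤ (1 + θ) ^ l := by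
        gcongr
        exact mul_le_of_le_one_left (by positivity) ((div_le_one (by positivity)).2 (by linarith))

def gammaRatio (q x : ℝ) : ℝ := Real.Gamma (x - q) / Real.Gamma x

theorem gammaRatio_pos {q x : ℝ} (hq : 0 ≤ q) (hqx : q < x) : 0 < gammaRatio q x :=
  div_pos (Real.Gamma_pos_of_pos (sub_pos.2 hqx)) (Real.Gamma_pos_of_pos (by linarith))

theorem gammaRatio_add_one_mul {q x : ℝ} (hxq : 0 < x - q) (hx : 0 < x) :
    gammaRatio q (x + 1) * x = gammaRatio q x * (x - q) := by
  have := (Real.Gamma_pos_of_pos hx).ne'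
  rw [gammaRatio, gammaRatio, add_sub_right_comm, Real.Gamma_add_one hxq.ne',
    Real.Gamma_add_one hx.ne']
  field_simp

theorem rpow_neg_le_gammaRatio {q x : ℝ} (hq : 0 ≤ q) (hqx : q < x) :
    x ^ (-q) ≤ gammaRatio q x := by
  have hx : 0 < x := by linarith
  have h := Real.Gamma_add_le_Gamma_mul_rpow (sub_pos.2 hqx) hq
  rw [sub_add_cancel] at h
  rw [Real.rpow_neg hx.le, gammaRatio, le_div_iff₀ (Real.Gamma_pos_of_pos hx),
    inv_mul_le_iff₀ (by positivity)]
  linarith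

theorem rpow_neg_le_mul_gammaRatio {c q x : ℝ} (hc : 0 ≤ c) (hq : 0 ≤ q) (hqc : q < 1 + c)
    (hx : 1 ≤ x) : x ^ (-q) ≤ (1 + c) ^ q * gammaRatio q (x + c) := by
  have hx0 : 0 < x := by linarith
  calc x ^ (-q) = (1 + c) ^ q * ((1 + c) * x) ^ (-q) := by
        rw [Real.mul_rpow (by linarith) hx0.le, ← mul_assoc, ← Real.rpow_add (by linarith),
          add_neg_cancel, Real.rpow_zero, one_mul]
    _ ≤ (1 + c) ^ q * (x + c) ^ (-q) :=
        mul_le_mul_of_nonneg_left (Real.rpow_le_rpow_of_nonpos (by linarith) (by nlinarith)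
          (by linarith)) (by positivity)
    _ ≤ (1 + c) ^ q * gammaRatio q (x + c) := by
        gcongr
        exact rpow_neg_le_gammaRatio hq (by linarith)

theorem div_rpow_rpow_neg_le_mul_gammaRatio {a c q x y : ℝ} (hc : 0 ≤ c) (hq : 0 ≤ q)
    (hqc : q < 1 + c) (hx : 1 ≤ x) (hy : 0 < y) :
    (x / y ^ a) ^ (-q) ≤ (1 + c) ^ q * (y ^ (a * q) * gammaRatio q (x + c)) := by
  rw [Real.div_rpow (by linarith) (by positivity), ← Real.rpow_mul hy.le, mul_neg,
    Real.rpow_neg hy.le, div_inv_eq_mul, mul_left_comm, mul_comm]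
  gcongr
  exact rpow_neg_le_mul_gammaRatio hc hq hqc hx

section

variable {Ω : Type*} {m mΩ : MeasurableSpace Ω} {μ : Measure Ω}

theorem integrable_comp_of_ae_le [IsFiniteMeasure μ] {X : Ω → ℕ} (hX : Measurable X) {N : ℕ}
    (hXN : ∀ᵐ ω ∂μ, X ω ≤ N) (φ : ℕ → ℝ) : Integrable (fun ω => φ (X ω)) μ := by
  refine Integrable.of_bound (Measurable.of_discrete.comp hX).aestronglyMeasurable
    (∑ k ∈ Finset.range (N + 1), |φ k|) ?_
  filter_upwards [hXN] with ω hω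
  exact Finset.single_le_sum (f := fun k => |φ k|) (fun k _ => abs_nonneg _)
    (Finset.mem_range.2 (Nat.lt_succ_of_le hω))

theorem measureReal_eq_integral_of_condExp_indicator [IsFiniteMeasure μ]
    (hm : m ≤ mΩ) {S : Set Ω} (hS : MeasurableSet S) {g : Ω → ℝ}
    (hg : μ[S.indicator (fun _ => (1 : ℝ)) | m] =ᵐ[μ] g) :
    μ.real S = ∫ ω, g ω ∂μ := by
  rw [← integral_indicator_one hS, ← integral_condExp hm]
  exact integral_congr_ae hg

theorem MeasureTheory.Integrable.mul_indicator_one {f : Ω → ℝ} (hf : Integrable f μ) {S : Set Ω}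
    (hS : MeasurableSet S) : Integrable (fun ω => f ω * S.indicator (fun _ => (1 : ℝ)) ω) μ := by
  simp_rw [← Set.indicator_mul_right, mul_one]
  exact hf.indicator hS

theorem integral_mul_indicator_eq_of_condExp [IsFiniteMeasure μ]
    (hm : m ≤ mΩ) {S : Set Ω} (hS : MeasurableSet S) {h g : Ω → ℝ}
    (hh : StronglyMeasurable[m] h) (hhi : Integrable h μ)
    (hg : μ[S.indicator (fun _ => (1 : ℝ)) | m] =ᵐ[μ] g) :
    ∫ ω, h ω * S.indicator (fun _ => (1 : ℝ)) ω ∂μ = ∫ ω, h ω * g ω ∂μ := by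
  rw [← integral_condExp hm]
  refine integral_congr_ae ?_
  filter_upwards [condExp_mul_of_stronglyMeasurable_left hh (hhi.mul_indicator_one hS)
    ((integrable_const 1).indicator hS), hg] with ω h1 h2
  exact h1.trans (congrArg (h ω * ·) h2)

def newBlockEvent (K : ℕ → Ω → ℕ) (B : ℕ → ℕ → Ω → ℕ) (n : ℕ) : Set Ω :=
  {ω | K (n+1) ω = K n ω + 1 ∧ B 1 (n+1) ω = B 1 n ω + 1 ∧
    ∀ s, 2 ≤ s → B s (n+1) ω = B s n ω}

def growEvent (K : ℕ → Ω → ℕ) (B : ℕ → ℕ → Ω → ℕ) (n r : ℕ) : Set Ω :=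
  {ω | K (n+1) ω = K n ω ∧ B r (n+1) ω + 1 = B r n ω ∧ B (r+1) (n+1) ω = B (r+1) n ω + 1 ∧
    ∀ s, 1 ≤ s → s ≠ r → s ≠ r + 1 → B s (n+1) ω = B s n ω}

theorem disjoint_newBlockEvent_growEvent (K : ℕ → Ω → ℕ) (B : ℕ → ℕ → Ω → ℕ) (n : ℕ) {r : ℕ}
    (hr : 1 ≤ r) : Disjoint (newBlockEvent K B n) (growEvent K B n r) := by
  refine Set.disjoint_left.2 fun ω hA hG => ?_
  obtain ⟨-, hB1, hBs⟩ := hA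
  obtain ⟨-, hBr, -⟩ := hG
  rcases (show r = 1 ∨ 2 ≤ r by omega) with rfl | hr2
  · omega
  · have := hBs r hr2
    omega

theorem pairwiseDisjoint_growEvent (K : ℕ → Ω → ℕ) (B : ℕ → ℕ → Ω → ℕ) (n : ℕ) :
    (Set.Ici 1).PairwiseDisjoint (growEvent K B n) := by
  refine fun r hr r' _ hne => Set.disjoint_left.2 fun ω hG hG' => ?_
  obtain ⟨-, hBr, -⟩ := hG
  obtain ⟨-, -, hBr'1, hBs⟩ := hG'
  by_cases hrr' : r = r' + 1
  · subst hrr'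
    omega
  · have := hBs r hr hne hrr'
    omega

namespace IsEwensPitman

variable {α θ : ℝ} {F : Filtration ℕ mΩ} {K : ℕ → Ω → ℕ} {B : ℕ → ℕ → Ω → ℕ}

theorem measurable_K (hEP : IsEwensPitman α θ μ F K B) (n : ℕ) : Measurable (K n) :=
  (hEP.meas_K n).mono (F.le n) le_rfl

theorem measurable_B (hEP : IsEwensPitman α θ μ F K B) (r n : ℕ) : Measurable (B r n) :=
  (hEP.meas_B r n).mono (F.le n) le_rfl

theorem measurableSet_newBlockEvent (hEP : IsEwensPitman α θ μ F K B) (n : ℕ) :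
    MeasurableSet (newBlockEvent K B n) := by
  have := hEP.measurable_K
  have := hEP.measurable_B
  unfold newBlockEvent
  measurability

theorem measurableSet_growEvent (hEP : IsEwensPitman α θ μ F K B) (n r : ℕ) :
    MeasurableSet (growEvent K B n r) := by
  have := hEP.measurable_K
  have := hEP.measurable_B
  unfold growEvent
  measurability

theorem ae_one_le_K (hEP : IsEwensPitman α θ μ F K B) {n : ℕ} (hn : 1 ≤ n) :
    ∀ᵐ ω ∂μ, 1 ≤ K n ω := by
  filter_upwards [hEP.sum_blocks n hn, hEP.sum_sizes n hn] with ω hK hsize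
  by_contra! h
  have hB : ∀ r ∈ Finset.Icc 1 n, B r n ω = 0 := Finset.sum_eq_zero_iff.1 (by omega)
  rw [Finset.sum_eq_zero fun r hr => by rw [hB r hr, mul_zero]] at hsize
  omega

theorem ae_K_le (hEP : IsEwensPitman α θ μ F K B) {n : ℕ} (hn : 1 ≤ n) :
    ∀ᵐ ω ∂μ, K n ω ≤ n := by
  filter_upwards [hEP.sum_blocks n hn, hEP.sum_sizes n hn] with ω hK hsize
  calc K n ω = ∑ r ∈ Finset.Icc 1 n, B r n ω := hK
    _ ≤ ∑ r ∈ Finset.Icc 1 n, r * B r n ω :=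
      Finset.sum_le_sum fun r hr => Nat.le_mul_of_pos_left _ (Finset.mem_Icc.1 hr).1
    _ = n := hsize.symm

theorem ae_B_le (hEP : IsEwensPitman α θ μ F K B) {n r : ℕ} (hr : r ∈ Finset.Icc 1 n) :
    ∀ᵐ ω ∂μ, B r n ω ≤ n := by
  filter_upwards [hEP.sum_sizes n ((Finset.mem_Icc.1 hr).1.trans (Finset.mem_Icc.1 hr).2)]
    with ω hsize
  calc B r n ω ≤ r * B r n ω := Nat.le_mul_of_pos_left _ (Finset.mem_Icc.1 hr).1
    _ ≤ ∑ i ∈ Finset.Icc 1 n, i * B i n ω :=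
      Finset.single_le_sum (f := fun i => i * B i n ω) (fun i _ => Nat.zero_le _) hr
    _ = n := hsize.symm

theorem integrable_comp_K (hEP : IsEwensPitman α θ μ F K B) {n : ℕ} (hn : 1 ≤ n)
    (φ : ℕ → ℝ) : Integrable (fun ω => φ (K n ω)) μ :=
  have := hEP.prob
  integrable_comp_of_ae_le (hEP.measurable_K n) (hEP.ae_K_le hn) φ

theorem integrable_comp_B (hEP : IsEwensPitman α θ μ F K B) {n r : ℕ}
    (hr : r ∈ Finset.Icc 1 n) (φ : ℕ → ℝ) : Integrable (fun ω => φ (B r n ω)) μ :=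
  have := hEP.prob
  integrable_comp_of_ae_le (hEP.measurable_B r n) (hEP.ae_B_le hr) φ

theorem ae_sum_transition_probs_eq_one (hEP : IsEwensPitman α θ μ F K B) {n : ℕ}
    (hn : 1 ≤ n) (hnθ : (n : ℝ) + θ ≠ 0) :
    ∀ᵐ ω ∂μ, (α * K n ω + θ) / (n + θ)
      + ∑ r ∈ Finset.Icc 1 n, ((r : ℝ) - α) * B r n ω / (n + θ) = 1 := by
  filter_upwards [hEP.sum_blocks n hn, hEP.sum_sizes n hn] with ω hK hsize
  have hK' : (K n ω : ℝ) = ∑ r ∈ Finset.Icc 1 n, (B r n ω : ℝ) := by exact_mod_cast hK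
  have hsize' : (n : ℝ) = ∑ r ∈ Finset.Icc 1 n, (r : ℝ) * B r n ω := by exact_mod_cast hsize
  rw [← Finset.sum_div, ← add_div, div_eq_one_iff_eq hnθ]
  simp only [sub_mul, Finset.sum_sub_distrib, ← Finset.mul_sum]
  rw [← hK', ← hsize']
  ring

theorem ae_mem_newBlockEvent_or_growEvent (hEP : IsEwensPitman α θ μ F K B) {n : ℕ}
    (hn : 1 ≤ n) (hnθ : (n : ℝ) + θ ≠ 0) :
    ∀ᵐ ω ∂μ, ω ∈ newBlockEvent K B n ∪ ⋃ r ∈ Finset.Icc 1 n, growEvent K B n r := by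
  have := hEP.prob
  have hGmeas : ∀ r ∈ Finset.Icc 1 n, MeasurableSet (growEvent K B n r) :=
    fun r _ => hEP.measurableSet_growEvent n r
  have hGint : ∀ r ∈ Finset.Icc 1 n,
      Integrable (fun ω => ((r : ℝ) - α) * B r n ω / (n + θ)) μ :=
    fun r hr => hEP.integrable_comp_B hr fun b => ((r : ℝ) - α) * b / (n + θ)
  have hU : MeasurableSet (newBlockEvent K B n ∪ ⋃ r ∈ Finset.Icc 1 n, growEvent K B n r) :=
    (hEP.measurableSet_newBlockEvent n).union (Finset.measurableSet_biUnion _ hGmeas)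
  have hμU : μ (newBlockEvent K B n ∪ ⋃ r ∈ Finset.Icc 1 n, growEvent K B n r) = 1 := by
    rw [← ENNReal.toReal_eq_one_iff, ← measureReal_def]
    have hdisj : Disjoint (newBlockEvent K B n) (⋃ r ∈ Finset.Icc 1 n, growEvent K B n r) := by
      simp only [Set.disjoint_iUnion_right]
      exact fun r hr => disjoint_newBlockEvent_growEvent K B n (Finset.mem_Icc.1 hr).1
    rw [measureReal_union hdisj (Finset.measurableSet_biUnion _ hGmeas) (measure_ne_top μ _)
      (measure_ne_top μ _)]
    rw [measureReal_biUnion_finset ((pairwiseDisjoint_growEvent K B n).subset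
        fun r hr => Set.mem_Ici.2 (Finset.mem_Icc.1 hr).1) hGmeas]
    rw [measureReal_eq_integral_of_condExp_indicator (F.le n)
        (hEP.measurableSet_newBlockEvent n) (hEP.trans_new n hn)]
    rw [Finset.sum_congr rfl fun r hr => measureReal_eq_integral_of_condExp_indicator (F.le n)
        (hEP.measurableSet_growEvent n r) (hEP.trans_grow n hn r (Finset.mem_Icc.1 hr).1)]
    rw [← integral_finsetSum _ hGint,
      ← integral_add (hEP.integrable_comp_K hn fun k => (α * k + θ) / (n + θ))
        (integrable_finsetSum _ hGint),
      integral_congr_ae (hEP.ae_sum_transition_probs_eq_one hn hnθ)]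
    simp
  exact (mem_ae_iff_prob_eq_one hU).2 hμU

theorem ae_K_succ_eq_of_notMem (hEP : IsEwensPitman α θ μ F K B) {n : ℕ}
    (hn : 1 ≤ n) (hnθ : (n : ℝ) + θ ≠ 0) :
    ∀ᵐ ω ∂μ, ω ∉ newBlockEvent K B n → K (n + 1) ω = K n ω := by
  filter_upwards [hEP.ae_mem_newBlockEvent_or_growEvent hn hnθ] with ω hω hA
  obtain ⟨r, -, hG⟩ : ∃ r ∈ Finset.Icc 1 n, ω ∈ growEvent K B n r := by simpa [hA] using hω
  exact hG.1

theorem integral_comp_K_succ (hEP : IsEwensPitman α θ μ F K B) {n : ℕ}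
    (hn : 1 ≤ n) (hnθ : (n : ℝ) + θ ≠ 0) (φ : ℕ → ℝ) :
    ∫ ω, φ (K (n + 1) ω) ∂μ = ∫ ω, (φ (K n ω)
      + (φ (K n ω + 1) - φ (K n ω)) * ((α * K n ω + θ) / (n + θ))) ∂μ := by
  have := hEP.prob
  set A := newBlockEvent K B n
  have hdecomp : (fun ω => φ (K (n + 1) ω)) =ᵐ[μ] fun ω =>
      φ (K n ω) + (φ (K n ω + 1) - φ (K n ω)) * A.indicator (fun _ => (1 : ℝ)) ω := by
    filter_upwards [hEP.ae_K_succ_eq_of_notMem hn hnθ] with ω hω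
    by_cases hA : ω ∈ A
    · simp [hA, hA.1]
    · simp [hA, hω hA]
  have hpull := integral_mul_indicator_eq_of_condExp (F.le n)
    (hEP.measurableSet_newBlockEvent n) (h := fun ω => φ (K n ω + 1) - φ (K n ω))
    ((Measurable.of_discrete (f := fun k => φ (k + 1) - φ k)).comp
      (hEP.meas_K n)).stronglyMeasurable
    (hEP.integrable_comp_K hn fun k => φ (k + 1) - φ k) (hEP.trans_new n hn)
  rw [integral_congr_ae hdecomp, integral_add (hEP.integrable_comp_K hn φ), hpull,
    ← integral_add (hEP.integrable_comp_K hn φ)]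
  · exact hEP.integrable_comp_K hn fun k => (φ (k + 1) - φ k) * ((α * k + θ) / (n + θ))
  · exact (hEP.integrable_comp_K hn fun k => φ (k + 1) - φ k).mul_indicator_one
      (hEP.measurableSet_newBlockEvent n)

theorem integral_comp_K_succ_eq_mul (hEP : IsEwensPitman α θ μ F K B) {n : ℕ}
    (hn : 1 ≤ n) (hnθ : (n : ℝ) + θ ≠ 0) {φ : ℕ → ℝ} {l : ℝ}
    (hφ : ∀ k, 1 ≤ k → φ (k + 1) * (α * k + θ) = φ k * (α * k + θ - l)) :
    ∫ ω, φ (K (n + 1) ω) ∂μ = (1 - l / (n + θ)) * ∫ ω, φ (K n ω) ∂μ := by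
  rw [hEP.integral_comp_K_succ hn hnθ, ← integral_const_mul]
  refine integral_congr_ae ?_
  filter_upwards [hEP.ae_one_le_K hn] with ω hω
  have := hφ _ hω
  field_simp
  linear_combination this

theorem integral_comp_K_eq_mul_prod (hEP : IsEwensPitman α θ μ F K B) (hθ : -1 < θ)
    {φ : ℕ → ℝ} {l : ℝ}
    (hφ : ∀ k, 1 ≤ k → φ (k + 1) * (α * k + θ) = φ k * (α * k + θ - l)) {n : ℕ} (hn : 1 ≤ n) :
    ∫ ω, φ (K n ω) ∂μ = φ 1 * ∏ j ∈ Finset.Ico 1 n, (1 - l / (j + θ)) := by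
  have := hEP.prob
  induction n, hn using Nat.le_induction with
  | base =>
    have hK1 : (fun ω => φ (K 1 ω)) =ᵐ[μ] fun _ => φ 1 := hEP.init_K.mono fun ω h => by simp [h]
    simp [integral_congr_ae hK1]
  | succ n hn ih =>
    have hnθ : (n : ℝ) + θ ≠ 0 := by
      have : (1 : ℝ) ≤ n := by exact_mod_cast hn
      linarith
    rw [hEP.integral_comp_K_succ_eq_mul hn hnθ hφ, ih, Finset.prod_Ico_succ_top hn]
    ring

theorem integral_gammaRatio_K (hEP : IsEwensPitman α θ μ F K B) (hα : 0 < α) (hθ : -1 < θ)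
    {q : ℝ} (hq : 0 ≤ q) (hqα : q < 1 + θ / α) {n : ℕ} (hn : 1 ≤ n) :
    ∫ ω, gammaRatio q (K n ω + θ / α) ∂μ
      = gammaRatio q (1 + θ / α) * ∏ j ∈ Finset.Ico 1 n, (1 - α * q / (j + θ)) := by
  have hφ (k : ℕ) (hk : 1 ≤ k) : gammaRatio q ((k + 1 : ℕ) + θ / α) * (α * k + θ)
      = gammaRatio q (k + θ / α) * (α * k + θ - α * q) := by
    have hk1 : (1 : ℝ) ≤ k := by exact_mod_cast hk
    have hθα : α * (θ / α) = θ := mul_div_cancel₀ θ hα.ne'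
    have hrec := gammaRatio_add_one_mul (q := q) (x := k + θ / α) (by linarith) (by linarith)
    rw [Nat.cast_add, Nat.cast_one, add_right_comm]
    linear_combination α * hrec - (gammaRatio q (k + θ / α + 1) - gammaRatio q (k + θ / α)) * hθα
  simpa using hEP.integral_comp_K_eq_mul_prod hθ (φ := fun k => gammaRatio q (k + θ / α)) hφ hn

theorem rpow_mul_integral_gammaRatio_K_le (hEP : IsEwensPitman α θ μ F K B) (hα : 0 < α)
    (hθ : 0 ≤ θ) {q : ℝ} (hq : 0 ≤ q) (hqα : q < 1 + θ / α) (hαq : α * q ≤ 1 + θ) {n : ℕ}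
    (hn : 1 ≤ n) :
    (n : ℝ) ^ (α * q) * ∫ ω, gammaRatio q (K n ω + θ / α) ∂μ
      ≤ gammaRatio q (1 + θ / α) * (1 + θ) ^ (α * q) := by
  rw [hEP.integral_gammaRatio_K hα (by linarith) hq hqα hn, mul_left_comm]
  exact mul_le_mul_of_nonneg_left
    (rpow_mul_prod_one_sub_div_le hθ (by positivity) hαq hn)
    (gammaRatio_pos hq (by linarith)).le

end IsEwensPitman

end

/-- Uniform bound on the negative moments of `K_n`: for `θ > 0` and `0 < q < 1 + θ/α`,
`sup_{n≥1} E[(K_n/n^α)^{-q}] < ∞`. -/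
theorem uniform_negative_moments (α θ : ℝ) (hα0 : 0 < α) (hα1 : α < 1) (hθ : 0 < θ)
    {Ω : Type*} [mΩ : MeasurableSpace Ω] (μ : Measure Ω) (F : Filtration ℕ mΩ)
    (K : ℕ → Ω → ℕ) (B : ℕ → ℕ → Ω → ℕ) (hEP : IsEwensPitman α θ μ F K B)
    (q : ℝ) (hq0 : 0 < q) (hq1 : q < 1 + θ / α) :
    ∃ C : ENNReal, C ≠ ⊤ ∧ ∀ n : ℕ, 1 ≤ n →
      ∫⁻ ω, ENNReal.ofReal (((K n ω : ℝ) / (n : ℝ) ^ α) ^ (-q)) ∂μ ≤ C := by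
  set c := θ / α
  have hc : 0 < c := by positivity
  have hαq : α * q ≤ 1 + θ := by
    nlinarith [mul_lt_mul_of_pos_left hq1 hα0, mul_div_cancel₀ θ hα0.ne']
  refine ⟨ENNReal.ofReal ((1 + c) ^ q * (gammaRatio q (1 + c) * (1 + θ) ^ (α * q))),
    ENNReal.ofReal_ne_top, fun n hn => ?_⟩
  have hn0 : (0 : ℝ) < n := by exact_mod_cast hn
  calc ∫⁻ ω, ENNReal.ofReal (((K n ω : ℝ) / (n : ℝ) ^ α) ^ (-q)) ∂μ
      ≤ ∫⁻ ω, ENNReal.ofReal ((1 + c) ^ q * ((n : ℝ) ^ (α * q) * gammaRatio q (K n ω + c))) ∂μ := by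
        refine lintegral_mono_ae ?_
        filter_upwards [hEP.ae_one_le_K hn] with ω hω
        exact ENNReal.ofReal_le_ofReal (div_rpow_rpow_neg_le_mul_gammaRatio hc.le hq0.le hq1
          (by exact_mod_cast hω) hn0)
    _ = ENNReal.ofReal ((1 + c) ^ q * ((n : ℝ) ^ (α * q) * ∫ ω, gammaRatio q (K n ω + c) ∂μ)) := by
        rw [← integral_const_mul, ← integral_const_mul, ofReal_integral_eq_lintegral_ofReal]
        · exact ((hEP.integrable_comp_K hn fun k => gammaRatio q (k + c)).const_mul _).const_mul _
        · filter_upwards [hEP.ae_one_le_K hn] with ω hω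
          have : (1 : ℝ) ≤ K n ω := by exact_mod_cast hω
          exact mul_nonneg (by positivity)
            (mul_nonneg (by positivity) (gammaRatio_pos hq0.le (by linarith)).le)
    _ ≤ ENNReal.ofReal ((1 + c) ^ q * (gammaRatio q (1 + c) * (1 + θ) ^ (α * q))) :=
        ENNReal.ofReal_le_ofReal (mul_le_mul_of_nonneg_left
          (hEP.rpow_mul_integral_gammaRatio_K_le hα0 hθ.le hq0.le hq1 hαq hn) (by positivity))

end
end

section
/- Let α∈(0,1). For every integer r≥1, ∑_{i=1}^{r} b_{r,i}² p_α(i) = −p_α(r)²·((r−α)^{(r)}/(−α)^{(r)} − 1), where b_{r,i}=(−1)^{r−i}(i−α)^{(r−i)}/(r−i)!. -/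
noncomputable section

/-- The coefficients `b_{r,i} = (-1)^(r-i) (i-α)^(r-i) / (r-i)!` for `1 ≤ i ≤ r`. -/
def bCoef (α : ℝ) (r i : ℕ) : ℝ :=
  (-1 : ℝ) ^ (r - i) * risingFactorial ((i : ℝ) - α) (r - i) / (Nat.factorial (r - i) : ℝ)

lemma risingFactorial_add (a : ℝ) (m k : ℕ) :
    risingFactorial a (m + k) = risingFactorial a m * risingFactorial (a + m) k := by
  induction k with
  | zero => simp [risingFactorial]
  | succ k ih =>
    rw [← Nat.add_assoc]
    show risingFactorial a (m + k) * (a + ((m + k : ℕ) : ℝ)) =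
      risingFactorial a m * (risingFactorial (a + m) k * ((a + m) + (k : ℝ)))
    rw [ih]
    push_cast
    ring

lemma risingFactorial_one_add (a : ℝ) (n : ℕ) :
    risingFactorial a (1 + n) = a * risingFactorial (a + 1) n := by
  rw [risingFactorial_add]
  simp [risingFactorial]

lemma risingFactorial_pos {a : ℝ} (ha : 0 < a) (n : ℕ) : 0 < risingFactorial a n := by
  induction n with
  | zero => norm_num [risingFactorial]
  | succ n ih =>
    show 0 < risingFactorial a n * (a + (n : ℝ))
    exact mul_pos ih (by positivity)

lemma risingFactorial_eq_ascPochhammer (a : ℝ) (n : ℕ) :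
    risingFactorial a n = (ascPochhammer ℝ n).eval a := by
  induction n with
  | zero => simp [risingFactorial]
  | succ n ih =>
    rw [ascPochhammer_succ_right]
    show risingFactorial a n * (a + (n : ℝ)) = _
    simp [ih]

lemma descPochhammer_smeval_real (x : ℝ) (k : ℕ) :
    (descPochhammer ℤ k).smeval x = risingFactorial (x - k + 1) k := by
  rw [Polynomial.descPochhammer_smeval_eq_ascPochhammer,
    Polynomial.ascPochhammer_smeval_eq_eval, ← risingFactorial_eq_ascPochhammer]

/-- Chu–Vandermonde identity in rising-factorial form. -/
lemma vandermonde_rf (x : ℝ) (n : ℕ) :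
    ∑ i ∈ Finset.range (n + 1),
      (n.choose i : ℝ) * (n.descFactorial i : ℝ) * risingFactorial ((i : ℝ) + x) (n - i) =
      risingFactorial ((n : ℝ) + x) n := by
  have h := Ring.descPochhammer_smeval_add (R := ℝ) (r := (n : ℝ)) (s := (n : ℝ) - 1 + x) n
    (Commute.all _ _)
  rw [descPochhammer_smeval_real, Finset.Nat.sum_antidiagonal_eq_sum_range_succ_mk] at h
  rw [show (n : ℝ) + ((n : ℝ) - 1 + x) - (n : ℝ) + 1 = (n : ℝ) + x from by ring] at h
  dsimp only at h
  rw [h]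
  refine Finset.sum_congr rfl ?_
  intro i hi
  have hle : i ≤ n := Nat.lt_succ_iff.mp (Finset.mem_range.mp hi)
  rw [Polynomial.descPochhammer_smeval_eq_descFactorial, descPochhammer_smeval_real]
  rw [show (n : ℝ) - 1 + x - ((n - i : ℕ) : ℝ) + 1 = (i : ℝ) + x from by
    rw [Nat.cast_sub hle]; ring]
  ring

/-- For every `r ≥ 1`, `∑_{i=1}^r b_{r,i}² p_α(i) = -p_α(r)² ((r-α)^(r)/(-α)^(r) - 1)`. -/
theorem sum_bCoef_sq_sibuya (α : ℝ) (hα0 : 0 < α) (hα1 : α < 1) (r : ℕ) (hr : 1 ≤ r) :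
    ∑ i ∈ Finset.Icc 1 r, (bCoef α r i) ^ 2 * sibuya α i =
      -(sibuya α r) ^ 2 *
        (risingFactorial ((r : ℝ) - α) r / risingFactorial (-α) r - 1) := by
  set B1 : ℝ := risingFactorial (1 - α) (r - 1) with hB1
  set A : ℝ := risingFactorial ((r : ℝ) - α) r with hA
  have hneg : risingFactorial (-α) r = -α * B1 := by
    calc risingFactorial (-α) r = risingFactorial (-α) (1 + (r - 1)) := by
          rw [show 1 + (r - 1) = r from by omega]
      _ = -α * risingFactorial (-α + 1) (r - 1) := risingFactorial_one_add _ _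
      _ = -α * B1 := by rw [hB1, show (-α + 1 : ℝ) = 1 - α from by ring]
  -- per-term rewriting
  have hterm : ∀ i ∈ Finset.Icc 1 r, (bCoef α r i) ^ 2 * sibuya α i =
      (α * B1 / ((r.factorial : ℝ)) ^ 2) *
        ((r.choose i : ℝ) * (r.descFactorial i : ℝ) * risingFactorial ((i : ℝ) - α) (r - i)) := by
    intro i hi
    obtain ⟨h1, h2⟩ := Finset.mem_Icc.mp hi
    set R1 := risingFactorial ((i : ℝ) - α) (r - i) with hR1
    set R2 := risingFactorial (1 - α) (i - 1) with hR2
    have hsplit : B1 = R2 * R1 := by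
      rw [hB1, hR1, hR2, show r - 1 = (i - 1) + (r - i) from by omega, risingFactorial_add]
      congr 2
      rw [Nat.cast_sub h1]
      push_cast
      ring
    have hc : (r.choose i : ℝ) * (i.factorial : ℝ) * ((r - i).factorial : ℝ) =
        (r.factorial : ℝ) := by
      exact_mod_cast congrArg (Nat.cast (R := ℝ)) (Nat.choose_mul_factorial_mul_factorial h2)
    have hd : ((r - i).factorial : ℝ) * (r.descFactorial i : ℝ) = (r.factorial : ℝ) := by
      exact_mod_cast congrArg (Nat.cast (R := ℝ)) (Nat.factorial_mul_descFactorial h2)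
    have hr2 : (r.factorial : ℝ) ^ 2 = (r.choose i : ℝ) * (r.descFactorial i : ℝ) *
        ((r - i).factorial : ℝ) ^ 2 * (i.factorial : ℝ) := by
      linear_combination (-(((r - i).factorial : ℝ) * (r.descFactorial i : ℝ))) * hc -
        (r.factorial : ℝ) * hd
    have hfi : (0 : ℝ) < (i.factorial : ℝ) := by positivity
    have hfri : (0 : ℝ) < ((r - i).factorial : ℝ) := by positivity
    have hfr : (0 : ℝ) < (r.factorial : ℝ) := by positivity
    have hsq : ((-1 : ℝ) ^ (r - i)) ^ 2 = 1 := by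
      rw [← pow_mul, mul_comm, pow_mul]; norm_num
    have lhs_eq : (bCoef α r i) ^ 2 * sibuya α i =
        α * R2 * R1 ^ 2 / (((r - i).factorial : ℝ) ^ 2 * (i.factorial : ℝ)) := by
      rw [bCoef, sibuya, div_pow, mul_pow, hsq, one_mul, ← hR1, ← hR2]
      ring
    rw [lhs_eq, hsplit]
    rw [div_mul_eq_mul_div, div_eq_div_iff (by positivity) (by positivity)]
    linear_combination (α * R2 * R1 ^ 2) * hr2
  rw [Finset.sum_congr rfl hterm, ← Finset.mul_sum]
  -- evaluate the remaining sum via Vandermonde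
  have hins : Finset.range (r + 1) = insert 0 (Finset.Icc 1 r) := by
    ext x; simp only [Finset.mem_range, Finset.mem_insert, Finset.mem_Icc]; omega
  have hv := vandermonde_rf (-α) r
  rw [hins, Finset.sum_insert (by simp)] at hv
  simp only [Nat.choose_zero_right, Nat.descFactorial_zero, Nat.cast_one, Nat.cast_zero,
    Nat.sub_zero, one_mul, zero_add] at hv
  have hv' : ∑ i ∈ Finset.Icc 1 r,
      (r.choose i : ℝ) * (r.descFactorial i : ℝ) * risingFactorial ((i : ℝ) - α) (r - i) =
      A + α * B1 := by
    calc ∑ i ∈ Finset.Icc 1 r,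
          (r.choose i : ℝ) * (r.descFactorial i : ℝ) * risingFactorial ((i : ℝ) - α) (r - i)
        = ∑ i ∈ Finset.Icc 1 r,
          (r.choose i : ℝ) * (r.descFactorial i : ℝ) * risingFactorial ((i : ℝ) + -α) (r - i) :=
          Finset.sum_congr rfl (fun i _ => by rw [sub_eq_add_neg])
      _ = risingFactorial ((r : ℝ) + -α) r - risingFactorial (-α) r := by linarith [hv]
      _ = A + α * B1 := by
          rw [show ((r : ℝ) + -α) = (r : ℝ) - α from by ring, hneg, ← hA]; ring
  rw [hv', sibuya, ← hB1, hneg]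
  have hB1pos : 0 < B1 := risingFactorial_pos (by linarith) _
  have hfr : (r.factorial : ℝ) ≠ 0 := Nat.cast_ne_zero.mpr (Nat.factorial_ne_zero r)
  have hα : α ≠ 0 := ne_of_gt hα0
  have hB1ne : B1 ≠ 0 := ne_of_gt hB1pos
  field_simp
  ring

end
end

section
/- Let α∈(0,1) and θ>0. There exists a constant E>0 (depending only on α and θ) such that for all integers n≥1 and all integers k with 1≤k≤n and k≤n^α, one has ((θ/α)^{(k)}/(θ)^{(n)}) · 𝒞(n,k;α) ≤ E·k^{θ/α}/n^{α+θ}, where 𝒞(n,k;α) = (1/k!)·∑_{i=0}^{k} C(k,i)(−1)^i(−iα)^{(n)} is the generalized factorial coefficient (equal, up to the stated prefactor, to the probability that the Ewens–Pitman random partition of {1,…,n} with parameters (α,θ) has exactly k blocks). -/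
/-!
The probabilities `p n k` obey the recursion
`(n + θ) p (n+1) (k+1) = (n - (k+1)α) p n (k+1) + (θ + kα) p n k`, whose coefficients are
nonnegative on the support `k ≤ n`; so a nonnegative supersolution dominating `p` at one time `N`
dominates it at all later times. The weight `w k = k (θ/α)^(k) / k!` satisfies
`(θ + kα) w k = αk w (k+1)`, hence `w k ∏_{1 ≤ m < n} (m - α)/(m + θ)` solves the recursion
exactly below the diagonal, and is a supersolution on the diagonal once `α (n+1) ≤ n`; before
that time `p ≤ 1` suffices. Finally `w k ≤ (θ/α) e^{θ/α} k^{θ/α}`, as `log (w k / (θ/α))` is at most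
`θ/α` times a harmonic number, and `∏_{1 ≤ m < n} (1 - (α+θ)/(m+θ)) ≤ ((1+θ)/(n+θ))^{α+θ}`
by `1 - x ≤ e^{-x}` and `log (1 + x) ≤ x`.
-/

noncomputable section

/-- Generalized factorial coefficient
`𝒞(n,k;α) = (1/k!) ∑_{i=0}^k C(k,i) (-1)^i (-iα)^(n)`. -/
def genFactCoef (α : ℝ) (n k : ℕ) : ℝ :=
  (1 / (Nat.factorial k : ℝ)) *
    ∑ i ∈ Finset.range (k + 1),
      (k.choose i : ℝ) * (-1 : ℝ) ^ i * risingFactorial (-(i : ℝ) * α) n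

open Finset Real

namespace BlockCount

theorem risingFactorial_succ (a : ℝ) (m : ℕ) :
    risingFactorial a (m + 1) = risingFactorial a m * (a + m) := rfl

theorem risingFactorial_zero_succ (m : ℕ) : risingFactorial 0 (m + 1) = 0 := by
  induction m with
  | zero => simp [risingFactorial]
  | succ m ih => rw [risingFactorial_succ, ih, zero_mul]

theorem genFactCoef_zero_zero (α : ℝ) : genFactCoef α 0 0 = 1 := by
  simp [genFactCoef, risingFactorial]

theorem genFactCoef_succ_zero (α : ℝ) (n : ℕ) : genFactCoef α (n + 1) 0 = 0 := by
  simp [genFactCoef, risingFactorial_zero_succ]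

theorem genFactCoef_zero_succ (α : ℝ) (k : ℕ) : genFactCoef α 0 (k + 1) = 0 := by
  have h := Int.alternating_sum_range_choose (n := k + 1)
  rw [if_neg k.succ_ne_zero] at h
  have hR : ∑ i ∈ range (k + 2), ((k + 1).choose i : ℝ) * (-1) ^ i = 0 := by
    simpa [mul_comm] using congrArg (Int.cast (R := ℝ)) h
  simp [genFactCoef, risingFactorial, hR]

theorem cast_choose_succ_mul_sub (k i : ℕ) (hi : i ≤ k + 1) :
    ((k + 1).choose i : ℝ) * (k + 1 - i) = (k + 1) * k.choose i := by
  have h := congrArg (Nat.cast (R := ℝ)) (Nat.choose_mul_succ_eq k i)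
  push_cast [Nat.cast_sub hi] at h
  linarith

theorem genFactCoef_succ_succ (α : ℝ) (n k : ℕ) :
    genFactCoef α (n + 1) (k + 1) =
      (n - (k + 1) * α) * genFactCoef α n (k + 1) + α * genFactCoef α n k := by
  set T : ℕ → ℝ := fun i => (-1) ^ i * risingFactorial (-(i : ℝ) * α) n
  have hsplit : ∀ i ∈ range (k + 2),
      ((k + 1).choose i : ℝ) * (-1) ^ i * risingFactorial (-(i : ℝ) * α) (n + 1) =
        (n - (k + 1) * α) * (((k + 1).choose i : ℝ) * T i) + α * (k + 1) * (k.choose i * T i) := by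
    intro i hi
    have hchoose := cast_choose_succ_mul_sub k i (by simpa [Nat.lt_succ_iff] using hi)
    simp only [T, risingFactorial_succ]
    linear_combination α * T i * hchoose
  have hlast : ∑ i ∈ range (k + 2), (k.choose i : ℝ) * T i =
      ∑ i ∈ range (k + 1), (k.choose i : ℝ) * T i := by
    simp [sum_range_succ _ (k + 1), Nat.choose_succ_self]
  simp only [genFactCoef, sum_congr rfl hsplit, sum_add_distrib, ← mul_sum, hlast]
  simp only [T, ← mul_assoc, Nat.factorial_succ]
  push_cast
  field_simp

theorem genFactCoef_eq_zero_of_lt (α : ℝ) {n k : ℕ} (h : n < k) : genFactCoef α n k = 0 := by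
  induction n generalizing k with
  | zero => obtain ⟨k, rfl⟩ := Nat.exists_eq_add_one.mpr h; exact genFactCoef_zero_succ α k
  | succ n ih =>
    obtain ⟨k, rfl⟩ := Nat.exists_eq_add_one.mpr (Nat.zero_lt_of_lt h)
    rw [genFactCoef_succ_succ, ih (by omega), ih (by omega), mul_zero, mul_zero, add_zero]

def blockCountProb (α θ : ℝ) (n k : ℕ) : ℝ :=
  risingFactorial (θ / α) k / risingFactorial θ n * genFactCoef α n k

variable {α θ : ℝ}

theorem blockCountProb_zero_zero : blockCountProb α θ 0 0 = 1 := by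
  simp [blockCountProb, risingFactorial, genFactCoef_zero_zero]

theorem blockCountProb_succ_zero (n : ℕ) : blockCountProb α θ (n + 1) 0 = 0 := by
  rw [blockCountProb, genFactCoef_succ_zero, mul_zero]

theorem blockCountProb_eq_zero_of_lt {n k : ℕ} (h : n < k) : blockCountProb α θ n k = 0 := by
  rw [blockCountProb, genFactCoef_eq_zero_of_lt α h, mul_zero]

theorem blockCountProb_succ_succ (hα : α ≠ 0) (hθ : 0 < θ) (n k : ℕ) :
    (n + θ) * blockCountProb α θ (n + 1) (k + 1) =
      (n - (k + 1) * α) * blockCountProb α θ n (k + 1) + (θ + k * α) * blockCountProb α θ n k := by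
  have : (n : ℝ) + θ ≠ 0 := by positivity
  simp only [blockCountProb, risingFactorial_succ, genFactCoef_succ_succ]
  field_simp
  ring

theorem blockCountProb_le_of_supersolution (hα0 : 0 < α) (hα1 : α ≤ 1) (hθ : 0 < θ)
    {u : ℕ → ℕ → ℝ} {N : ℕ} (hu : ∀ n ≥ N, ∀ k, 0 ≤ u n k)
    (hbase : ∀ k, blockCountProb α θ N k ≤ u N k)
    (hdiag : ∀ n ≥ N, (θ + n * α) * u n n ≤ (n + θ) * u (n + 1) (n + 1))
    (hoffdiag : ∀ n ≥ N, ∀ k, k + 1 ≤ n →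
      (n - (k + 1) * α) * u n (k + 1) + (θ + k * α) * u n k ≤ (n + θ) * u (n + 1) (k + 1))
    {n : ℕ} (hn : N ≤ n) (k : ℕ) : blockCountProb α θ n k ≤ u n k := by
  induction n, hn using Nat.le_induction generalizing k with
  | base => exact hbase k
  | succ n hn ih =>
    obtain _ | k := k
    · rw [blockCountProb_succ_zero]
      exact hu _ (by omega) 0
    rcases lt_or_ge n k with hnk | hkn
    · rw [blockCountProb_eq_zero_of_lt (by omega)]
      exact hu _ (by omega) _
    refine le_of_mul_le_mul_left ?_ (by positivity : (0 : ℝ) < n + θ)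
    rw [blockCountProb_succ_succ hα0.ne' hθ]
    obtain rfl | hkn := hkn.eq_or_lt
    · rw [blockCountProb_eq_zero_of_lt (Nat.lt_succ_self k), mul_zero, zero_add]
      exact (mul_le_mul_of_nonneg_left (ih k) (by positivity)).trans (hdiag k hn)
    · have hcoef : 0 ≤ (n : ℝ) - (k + 1) * α := by
        have : ((k : ℝ) + 1) ≤ n := by exact_mod_cast hkn
        nlinarith
      calc _ ≤ (n - (k + 1) * α) * u n (k + 1) + (θ + k * α) * u n k := by
            gcongr
            exacts [ih _, ih _]
        _ ≤ _ := hoffdiag n hn k hkn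

theorem blockCountProb_le_one (hα0 : 0 < α) (hα1 : α ≤ 1) (hθ : 0 < θ) (n k : ℕ) :
    blockCountProb α θ n k ≤ 1 := by
  refine blockCountProb_le_of_supersolution (u := fun _ _ => 1) hα0 hα1 hθ
    (fun _ _ _ => zero_le_one) (fun k => ?_) (fun n _ => ?_) (fun n _ k hk => ?_) n.zero_le k
  · obtain _ | k := k
    · rw [blockCountProb_zero_zero]
    · rw [blockCountProb_eq_zero_of_lt k.succ_pos]; exact zero_le_one
  · nlinarith
  · nlinarith

def blockWeight (r : ℝ) (k : ℕ) : ℝ :=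
  k * risingFactorial r k / k.factorial

theorem blockWeight_zero (r : ℝ) : blockWeight r 0 = 0 := by
  simp [blockWeight]

theorem add_mul_blockWeight (r : ℝ) (k : ℕ) :
    (r + k) * blockWeight r k = k * blockWeight r (k + 1) := by
  simp only [blockWeight, risingFactorial_succ, Nat.factorial_succ]
  push_cast
  field_simp

theorem add_mul_blockWeight_div (hα : α ≠ 0) (k : ℕ) :
    (θ + k * α) * blockWeight (θ / α) k = α * k * blockWeight (θ / α) (k + 1) := by
  rw [mul_assoc, ← add_mul_blockWeight]
  field_simp

theorem blockWeight_succ_eq_mul_prod (r : ℝ) (k : ℕ) :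
    blockWeight r (k + 1) = r * ∏ j ∈ Icc 1 k, (1 + r / j) := by
  induction k with
  | zero => simp [blockWeight, risingFactorial]
  | succ k ih =>
    have h := add_mul_blockWeight r (k + 1)
    rw [prod_Icc_succ_top (by omega), ← mul_assoc, ← ih]
    push_cast at h ⊢
    field_simp
    linarith

theorem le_blockWeight {r : ℝ} (hr : 0 ≤ r) {k : ℕ} (hk : 1 ≤ k) : r ≤ blockWeight r k := by
  obtain ⟨k, rfl⟩ := Nat.exists_eq_add_of_le' hk
  rw [blockWeight_succ_eq_mul_prod]
  refine le_mul_of_one_le_right hr (one_le_prod fun j _ => ?_)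
  linarith [div_nonneg hr (Nat.cast_nonneg j)]

theorem blockWeight_nonneg {r : ℝ} (hr : 0 ≤ r) (k : ℕ) : 0 ≤ blockWeight r k := by
  obtain _ | k := k
  · rw [blockWeight_zero]
  · exact hr.trans (le_blockWeight hr k.succ_pos)

theorem prod_one_add_div_le_exp_harmonic {r : ℝ} (hr : 0 ≤ r) (k : ℕ) :
    ∏ j ∈ Icc 1 k, (1 + r / j) ≤ exp (r * harmonic k) := by
  calc ∏ j ∈ Icc 1 k, (1 + r / j) ≤ ∏ j ∈ Icc 1 k, exp (r / j) :=
        prod_le_prod (fun j _ => by positivity) fun j _ => by linarith [add_one_le_exp (r / j)]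
    _ = exp (r * harmonic k) := by
        rw [← exp_sum, harmonic_eq_sum_Icc]
        push_cast
        simp [mul_sum, div_eq_mul_inv]

theorem blockWeight_le {r : ℝ} (hr : 0 ≤ r) (k : ℕ) :
    blockWeight r k ≤ r * exp r * (k : ℝ) ^ r := by
  obtain _ | k := k
  · rw [blockWeight_zero]; positivity
  have hlog : (harmonic k : ℝ) ≤ 1 + log (k + 1 : ℕ) := by
    have h := harmonic_le_one_add_log (k + 1)
    rw [harmonic_succ, Rat.cast_add] at h
    linarith [show (0 : ℝ) ≤ ((k + 1 : ℕ) : ℚ)⁻¹ by positivity]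
  calc blockWeight r (k + 1) ≤ r * exp (r * harmonic k) := by
        rw [blockWeight_succ_eq_mul_prod]
        exact mul_le_mul_of_nonneg_left (prod_one_add_div_le_exp_harmonic hr k) hr
    _ ≤ r * exp (r * (1 + log (k + 1 : ℕ))) := by gcongr
    _ = r * exp r * ((k + 1 : ℕ) : ℝ) ^ r := by
        rw [rpow_def_of_pos (by positivity), mul_assoc, ← exp_add]
        ring_nf

def sizeWeight (α θ : ℝ) (n : ℕ) : ℝ :=
  ∏ m ∈ Ico 1 n, (m - α) / (m + θ)

theorem sizeWeight_succ (α θ : ℝ) {n : ℕ} (hn : 1 ≤ n) :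
    sizeWeight α θ (n + 1) = sizeWeight α θ n * ((n - α) / (n + θ)) :=
  prod_Ico_succ_top hn _

theorem sizeWeight_pos (hα1 : α < 1) (hθ : 0 ≤ θ) (n : ℕ) : 0 < sizeWeight α θ n := by
  refine prod_pos fun m hm => ?_
  have : (1 : ℝ) ≤ m := by exact_mod_cast (mem_Ico.mp hm).1
  exact div_pos (by linarith) (by linarith)

theorem sizeWeight_antitone (hα0 : 0 ≤ α) (hα1 : α < 1) (hθ : 0 ≤ θ) :
    Antitone (sizeWeight α θ) := by
  refine antitone_nat_of_succ_le fun n => ?_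
  obtain _ | n := n
  · simp [sizeWeight]
  rw [sizeWeight_succ α θ (by omega)]
  refine mul_le_of_le_one_right (sizeWeight_pos hα1 hθ _).le ?_
  rw [div_le_one (by positivity)]
  linarith

theorem one_sub_div_le_rpow {x β : ℝ} (hx : 0 < x) (hβ : 0 ≤ β) :
    1 - β / x ≤ (x / (x + 1)) ^ β := by
  have hlog : -(1 / x) ≤ log (x / (x + 1)) := by
    have h := one_sub_inv_le_log_of_pos (by positivity : 0 < x / (x + 1))
    rw [inv_div] at h
    convert h using 1
    field_simp
    ring
  calc 1 - β / x ≤ exp (-(β / x)) := by linarith [add_one_le_exp (-(β / x))]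
    _ ≤ exp (log (x / (x + 1)) * β) := by
        gcongr
        linarith [mul_le_mul_of_nonneg_right hlog hβ, (by ring : -(1 / x) * β = -(β / x))]
    _ = (x / (x + 1)) ^ β := (rpow_def_of_pos (by positivity) β).symm

theorem sizeWeight_le_rpow (hα1 : α ≤ 1) (hθ : 0 ≤ θ) (hαθ : 0 ≤ α + θ) {n : ℕ} (hn : 1 ≤ n) :
    sizeWeight α θ n ≤ ((1 + θ) / (n + θ)) ^ (α + θ) := by
  induction n, hn using Nat.le_induction with
  | base => simp [sizeWeight, div_self (by positivity : (1 : ℝ) + θ ≠ 0)]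
  | succ n hn ih =>
    have hnθ : (0 : ℝ) < n + θ := by positivity
    have hstep : ((n : ℝ) - α) / (n + θ) ≤ ((n + θ) / (n + θ + 1)) ^ (α + θ) := by
      convert one_sub_div_le_rpow hnθ hαθ using 1
      field_simp
      ring
    rw [sizeWeight_succ α θ hn]
    calc _ ≤ ((1 + θ) / (n + θ)) ^ (α + θ) * ((n + θ) / (n + θ + 1)) ^ (α + θ) := by
          have : (1 : ℝ) ≤ n := by exact_mod_cast hn
          gcongr
          exact div_nonneg (by linarith) hnθ.le
      _ = ((1 + θ) / ((n + 1 : ℕ) + θ)) ^ (α + θ) := by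
          rw [← mul_rpow (by positivity) (by positivity)]
          push_cast
          field_simp
          ring_nf

theorem sizeWeight_le (hα1 : α ≤ 1) (hθ : 0 ≤ θ) (hαθ : 0 ≤ α + θ) {n : ℕ} (hn : 1 ≤ n) :
    sizeWeight α θ n ≤ (1 + θ) ^ (α + θ) / (n : ℝ) ^ (α + θ) := by
  have hn' : (0 : ℝ) < n := by exact_mod_cast hn
  calc sizeWeight α θ n ≤ ((1 + θ) / (n + θ)) ^ (α + θ) := sizeWeight_le_rpow hα1 hθ hαθ hn
    _ ≤ ((1 + θ) / n) ^ (α + θ) := by gcongr; linarith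
    _ = (1 + θ) ^ (α + θ) / (n : ℝ) ^ (α + θ) := div_rpow (by positivity) hn'.le _

def blockCountMajorant (α θ : ℝ) (n k : ℕ) : ℝ :=
  blockWeight (θ / α) k * sizeWeight α θ n

theorem blockCountMajorant_nonneg (hα0 : 0 < α) (hα1 : α < 1) (hθ : 0 < θ) (n k : ℕ) :
    0 ≤ blockCountMajorant α θ n k :=
  mul_nonneg (blockWeight_nonneg (by positivity) k) (sizeWeight_pos hα1 hθ.le n).le

theorem blockCountMajorant_succ_succ (hα : α ≠ 0) (hθ : 0 < θ) {n : ℕ} (hn : 1 ≤ n) (k : ℕ) :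
    (n - (k + 1) * α) * blockCountMajorant α θ n (k + 1) +
        (θ + k * α) * blockCountMajorant α θ n k =
      (n + θ) * blockCountMajorant α θ (n + 1) (k + 1) := by
  have : (n : ℝ) + θ ≠ 0 := by positivity
  rw [blockCountMajorant, blockCountMajorant, blockCountMajorant, sizeWeight_succ α θ hn]
  field_simp
  linear_combination sizeWeight α θ n * add_mul_blockWeight_div (θ := θ) hα k

theorem blockCountMajorant_diag (hα0 : 0 < α) (hα1 : α < 1) (hθ : 0 < θ) {n : ℕ} (hn : 1 ≤ n)
    (hαn : α * (n + 1) ≤ n) :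
    (θ + n * α) * blockCountMajorant α θ n n ≤
      (n + θ) * blockCountMajorant α θ (n + 1) (n + 1) := by
  rw [← blockCountMajorant_succ_succ hα0.ne' hθ hn]
  exact le_add_of_nonneg_left
    (mul_nonneg (by linarith) (blockCountMajorant_nonneg hα0 hα1 hθ n (n + 1)))

theorem blockCountProb_le_majorant_of_le (hα0 : 0 < α) (hα1 : α < 1) (hθ : 0 < θ) {N n : ℕ}
    (hn : 1 ≤ n) (hnN : n ≤ N) (k : ℕ) :
    blockCountProb α θ n k ≤ blockCountMajorant α θ n k / (θ / α * sizeWeight α θ N) := by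
  have hr : 0 < θ / α := by positivity
  have hgN := sizeWeight_pos hα1 hθ.le N
  obtain _ | k := k
  · obtain ⟨m, rfl⟩ := Nat.exists_eq_add_of_le' hn
    rw [blockCountProb_succ_zero, blockCountMajorant, blockWeight_zero, zero_mul, zero_div]
  calc blockCountProb α θ n (k + 1) ≤ 1 := blockCountProb_le_one hα0 hα1.le hθ _ _
    _ ≤ blockCountMajorant α θ n (k + 1) / (θ / α * sizeWeight α θ N) := by
      rw [one_le_div (by positivity)]
      exact mul_le_mul (le_blockWeight hr.le k.succ_pos)
        (sizeWeight_antitone hα0.le hα1 hθ.le hnN) hgN.le (blockWeight_nonneg hr.le _)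

theorem blockCountProb_le_majorant (hα0 : 0 < α) (hα1 : α < 1) (hθ : 0 < θ) {N : ℕ}
    (hN : α * (N + 1) ≤ N) {n : ℕ} (hn : 1 ≤ n) (k : ℕ) :
    blockCountProb α θ n k ≤ blockCountMajorant α θ n k / (θ / α * sizeWeight α θ N) := by
  set D := θ / α * sizeWeight α θ N
  have hD : 0 < D := mul_pos (by positivity) (sizeWeight_pos hα1 hθ.le N)
  have hN1 : 1 ≤ N := by
    by_contra h
    simp only [Nat.lt_one_iff.mp (not_le.mp h), Nat.cast_zero, zero_add, mul_one] at hN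
    linarith
  obtain hnN | hNn := le_total n N
  · exact blockCountProb_le_majorant_of_le hα0 hα1 hθ hn hnN k
  refine blockCountProb_le_of_supersolution (u := fun n k => blockCountMajorant α θ n k / D)
    hα0 hα1.le hθ (fun n _ k => div_nonneg (blockCountMajorant_nonneg hα0 hα1 hθ n k) hD.le)
    (blockCountProb_le_majorant_of_le hα0 hα1 hθ hN1 le_rfl) (fun n hn => ?_)
    (fun n hn k _ => ?_) hNn k
  · have hαn : α * (n + 1) ≤ n := by
      have : (N : ℝ) ≤ n := by exact_mod_cast hn
      nlinarith
    simp only [← mul_div_assoc]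
    exact div_le_div_of_nonneg_right (blockCountMajorant_diag hα0 hα1 hθ (hN1.trans hn) hαn) hD.le
  · simp only [← mul_div_assoc, ← add_div]
    rw [blockCountMajorant_succ_succ hα0.ne' hθ (hN1.trans hn)]

end BlockCount

open BlockCount

/-- There is a constant `E > 0` (depending only on `α, θ`) such that for all `n ≥ 1` and all
`1 ≤ k ≤ n` with `k ≤ n^α`, the probability `((θ/α)^(k)/(θ)^(n)) 𝒞(n,k;α)` that the
Ewens–Pitman partition of `{1,…,n}` has exactly `k` blocks is at most `E k^(θ/α)/n^(α+θ)`. -/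
theorem block_count_prob_upper_bound (α θ : ℝ) (hα0 : 0 < α) (hα1 : α < 1) (hθ : 0 < θ) :
    ∃ E : ℝ, 0 < E ∧
      ∀ n : ℕ, 1 ≤ n → ∀ k : ℕ, 1 ≤ k → k ≤ n → (k : ℝ) ≤ (n : ℝ) ^ α →
        risingFactorial (θ / α) k / risingFactorial θ n * genFactCoef α n k ≤
          E * (k : ℝ) ^ (θ / α) / (n : ℝ) ^ (α + θ) := by
  obtain ⟨N, hN⟩ := exists_nat_ge (α / (1 - α))
  have hN' : α * (N + 1) ≤ N := by
    rw [div_le_iff₀ (by linarith)] at hN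
    linarith
  have hgN := sizeWeight_pos hα1 hθ.le N
  refine ⟨exp (θ / α) * (1 + θ) ^ (α + θ) / sizeWeight α θ N, by positivity,
    fun n hn k _ _ _ => ?_⟩
  calc blockCountProb α θ n k
      ≤ blockCountMajorant α θ n k / (θ / α * sizeWeight α θ N) :=
        blockCountProb_le_majorant hα0 hα1 hθ hN' hn k
    _ ≤ θ / α * exp (θ / α) * (k : ℝ) ^ (θ / α) * ((1 + θ) ^ (α + θ) / (n : ℝ) ^ (α + θ)) /
          (θ / α * sizeWeight α θ N) := by
        rw [blockCountMajorant]
        gcongr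
        · exact (sizeWeight_pos hα1 hθ.le n).le
        · exact blockWeight_le (by positivity) k
        · exact sizeWeight_le hα1.le hθ.le (by positivity) hn
    _ = _ := by
        field_simp

end
end
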